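/- arXiv:1902.01171 — 2 statements merged into one kernel-verified Lean document; each statement's English description precedes it below -/
import Mathlib

section
/- Foster-type identity for weighted graphs: for a finite connected weighted graph G = (V,E,C) with n vertices, the effective resistances satisfy ∑_{{x,y} ∈ E} R_{xy} · c_{xy} = n − 1, where the sum is over unordered edges and R_{xy} = (U_x^{xy} + U_x^{yx})/μ_x is the effective resistance between x and y. -/
open Finset

variable {V : Type*} [Fintype V] [DecidableEq V]

/-- The weight (generalized degree) of a node: `μ_x = ∑_y c x y`. -/
noncomputable def nodeWeight (c : V → V → ℝ) (x : V) : ℝ := ∑ y, c x y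

/-- Transition probabilities of the random walk: `p x y = c x y / μ x`. -/
noncomputable def transProb (c : V → V → ℝ) (x y : V) : ℝ := c x y / nodeWeight c x

/-- The transition matrix killed at the target node `y` (rows at `y` set to zero), so that
`(killed c y ^ n) x z = P^x(X_0 ≠ y, …, X_{n-1} ≠ y, X_n = z)`. -/
noncomputable def killed (c : V → V → ℝ) (y : V) : Matrix V V ℝ :=
  Matrix.of fun u v => if u = y then 0 else transProb c u v

/-- The survival probability `P^x(τ_y > n)` of the walk started at `x`. -/
noncomputable def survival (c : V → V → ℝ) (x y : V) (n : ℕ) : ℝ :=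
  ∑ z ∈ Finset.univ.erase y, (killed c y ^ n) x z

/-- The expected hitting time `E^x(τ_y) = ∑_{n ≥ 0} P^x(τ_y > n)`. -/
noncomputable def hitExp (c : V → V → ℝ) (x y : V) : ℝ := ∑' n : ℕ, survival c x y n

/-- `U_z^{xy}`: the expected number of times `0 ≤ k < τ_y` with `X_k = z`, for the walk
started at `x`. -/
noncomputable def visitExp (c : V → V → ℝ) (x y z : V) : ℝ :=
  if z = y then 0 else ∑' n : ℕ, (killed c y ^ n) x z

/-- The effective resistance between `x` and `y`: `R_{xy} = (U_x^{xy} + U_x^{yx})/μ_x`. -/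
noncomputable def effRes (c : V → V → ℝ) (x y : V) : ℝ :=
  (visitExp c x y x + visitExp c y x x) / nodeWeight c x

/-!
Let `L` be the weighted Laplacian and `N = L + J`, with `J` the all-ones matrix; on a connected
graph `N` is invertible. For `x ≠ y` put `v = N⁻¹ (eₓ - e_y)`; since `1ᵀ N = n 1ᵀ`, `v` sums to
zero, so `L v = eₓ - e_y` and `w = μₓ (v - v y)` solves `(I - Q) w = eₓ` for the transition
matrix `Q` killed at `y`. Every vertex reaches `y`, so `Qⁿ → 0` and the Green function
`∑ₙ Qⁿ` has `(x, x)` entry `w x`; hence `R_{xy} = v x - v y = (eₓ - e_y)ᵀ N⁻¹ (eₓ - e_y)`.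
Summed against `c`, these quadratic forms give `2 tr (N⁻¹ L) = 2 (tr I - tr (N⁻¹ J)) = 2 (n - 1)`,
because `N 1 = n 1` makes the entries of `N⁻¹` sum to `1`.
-/

open Matrix Filter Topology

lemma tendsto_pow_atTop_nhds_zero_of_norm_pow_lt_one {R : Type*} [SeminormedRing R]
    [NormOneClass R] {a : R} (ha : ‖a‖ ≤ 1) {m : ℕ} (ham : ‖a ^ m‖ < 1) :
    Tendsto (a ^ ·) atTop (𝓝 0) := by
  have hm : m ≠ 0 := by
    rintro rfl
    simp at ham
  refine squeeze_zero_norm (fun n => ?_) ((tendsto_pow_atTop_nhds_zero_of_lt_one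
    (norm_nonneg _) ham).comp (Nat.tendsto_div_const_atTop hm))
  calc ‖a ^ n‖ = ‖(a ^ m) ^ (n / m) * a ^ (n % m)‖ := by
        rw [← pow_mul, ← pow_add, Nat.div_add_mod]
    _ ≤ ‖a ^ m‖ ^ (n / m) * ‖a‖ ^ (n % m) :=
        norm_mul_le_of_le (norm_pow_le _ _) (norm_pow_le _ _)
    _ ≤ ‖a ^ m‖ ^ (n / m) :=
        mul_le_of_le_one_right (by positivity) (pow_le_one₀ (norm_nonneg _) ha)

lemma sum_mul_apply {l m n α : Type*} [Fintype m] [Fintype n] [NonUnitalNonAssocSemiring α]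
    (A : Matrix l m α) (B : Matrix m n α) (u : l) :
    ∑ v, (A * B) u v = ∑ w, A u w * ∑ v, B w v := by
  simp only [Matrix.mul_apply, Finset.mul_sum]
  exact Finset.sum_comm

section Substochastic

variable {A : Matrix V V ℝ}

lemma sum_pow_apply_le_one (h0 : ∀ u v, 0 ≤ A u v) (h1 : ∀ u, ∑ v, A u v ≤ 1) (n : ℕ)
    (u : V) : ∑ v, (A ^ n) u v ≤ 1 := by
  induction n generalizing u with
  | zero => simp [one_apply]
  | succ n ih =>
    rw [pow_succ', sum_mul_apply]
    calc ∑ w, A u w * ∑ v, (A ^ n) w v ≤ ∑ w, A u w :=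
          Finset.sum_le_sum fun w _ => mul_le_of_le_one_right (h0 u w) (ih w)
      _ ≤ 1 := h1 u

lemma sum_pow_add_apply_le (h0 : ∀ u v, 0 ≤ A u v) (h1 : ∀ u, ∑ v, A u v ≤ 1) (m n : ℕ)
    (u : V) : ∑ v, (A ^ (m + n)) u v ≤ ∑ v, (A ^ m) u v := by
  rw [pow_add, sum_mul_apply]
  exact Finset.sum_le_sum fun w _ =>
    mul_le_of_le_one_right (pow_apply_nonneg h0 m u w) (sum_pow_apply_le_one h0 h1 n w)

attribute [local instance] Matrix.linftyOpNormedRing in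
lemma exists_linfty_opNorm_eq_sum_apply [Nonempty V] (h0 : ∀ u v, 0 ≤ A u v) :
    ∃ u, ‖A‖ = ∑ v, A u v := by
  obtain ⟨u, -, hu⟩ := Finset.exists_mem_eq_sup univ univ_nonempty fun i => ∑ j, ‖A i j‖₊
  refine ⟨u, ?_⟩
  rw [linfty_opNorm_def, hu]
  push_cast
  simp [Real.norm_of_nonneg (h0 _ _)]

end Substochastic

lemma tsum_pow_apply_eq_of_one_sub_mulVec_eq_single {Q : Matrix V V ℝ}
    (h0 : ∀ u v, 0 ≤ Q u v) (hlim : Tendsto (Q ^ ·) atTop (𝓝 0)) {w : V → ℝ} {z : V}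
    (hw : (1 - Q) *ᵥ w = Pi.single z 1) (x : V) : ∑' n, (Q ^ n) x z = w x := by
  refine ((hasSum_iff_tendsto_nat_of_nonneg (fun n => pow_apply_nonneg h0 n x z) _).2 ?_).tsum_eq
  have hpartial : ∀ N, ∑ n ∈ range N, (Q ^ n) x z = ((1 - Q ^ N) *ᵥ w) x := by
    intro N
    rw [← geom_sum_mul_neg, ← mulVec_mulVec, hw, mulVec_single_one]
    simp [Matrix.sum_apply]
  simp_rw [hpartial]
  have hcont : Continuous fun M : Matrix V V ℝ => ((1 - M) *ᵥ w) x := by fun_prop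
  simpa [Function.comp_def] using (hcont.tendsto 0).comp hlim

lemma pos_of_fromRel_adj {α : Type*} {c : α → α → ℝ} (hsym : ∀ u v, c u v = c v u) {a b : α}
    (h : (SimpleGraph.fromRel fun u v : α => 0 < c u v).Adj a b) : 0 < c a b := by
  rw [SimpleGraph.fromRel_adj] at h
  exact h.2.elim id fun h' => hsym a b ▸ h'

lemma nodeWeight_pos {α : Type*} [Fintype α] {c : α → α → ℝ} (hsym : ∀ u v, c u v = c v u)
    (hnn : ∀ u v, 0 ≤ c u v) (hconn : (SimpleGraph.fromRel fun u v : α => 0 < c u v).Connected)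
    {z y : α} (h : z ≠ y) :
    0 < nodeWeight c z := by
  obtain ⟨w⟩ := hconn.preconnected z y
  cases w with
  | nil => exact absurd rfl h
  | cons hab _ =>
    exact (pos_of_fromRel_adj hsym hab).trans_le
      (Finset.single_le_sum (fun v _ => hnn z v) (mem_univ _))

section Laplacian

variable (c : V → V → ℝ)

noncomputable def laplacian : Matrix V V ℝ := Matrix.diagonal (nodeWeight c) - Matrix.of c

lemma laplacian_mulVec_apply (x : V → ℝ) (u : V) :
    (laplacian c *ᵥ x) u = ∑ v, c u v * (x u - x v) := by
  rw [laplacian, sub_mulVec, Pi.sub_apply, mulVec_diagonal]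
  simp only [mulVec, dotProduct, of_apply, nodeWeight, mul_sub, Finset.sum_sub_distrib,
    Finset.sum_mul]

lemma laplacian_mulVec_affine (x : V → ℝ) (a b : ℝ) :
    laplacian c *ᵥ (fun t => a * (x t - b)) = a • laplacian c *ᵥ x := by
  ext u
  simp only [laplacian_mulVec_apply, Pi.smul_apply, smul_eq_mul, Finset.mul_sum]
  exact Finset.sum_congr rfl fun v _ => by ring

variable {c}

lemma sum_laplacian_mulVec (hsym : ∀ u v, c u v = c v u) (x : V → ℝ) :
    ∑ u, (laplacian c *ᵥ x) u = 0 := by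
  have hswap : ∑ u, ∑ v, c u v * (x u - x v) = ∑ u, ∑ v, c u v * (x v - x u) := by
    rw [Finset.sum_comm]; simp_rw [hsym]
  have hneg : ∑ u, ∑ v, c u v * (x v - x u) = -∑ u, ∑ v, c u v * (x u - x v) := by
    simp only [← Finset.sum_neg_distrib]
    exact Finset.sum_congr rfl fun u _ => Finset.sum_congr rfl fun v _ => by ring
  simp only [laplacian_mulVec_apply]
  linarith

lemma two_mul_dotProduct_laplacian_mulVec (hsym : ∀ u v, c u v = c v u) (x : V → ℝ) :
    2 * (x ⬝ᵥ laplacian c *ᵥ x) = ∑ u, ∑ v, c u v * (x u - x v) ^ 2 := by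
  have hform : x ⬝ᵥ laplacian c *ᵥ x = ∑ u, ∑ v, c u v * (x u * (x u - x v)) := by
    simp only [dotProduct, laplacian_mulVec_apply, Finset.mul_sum]
    exact Finset.sum_congr rfl fun u _ => Finset.sum_congr rfl fun v _ => by ring
  have hswap : ∑ u, ∑ v, c u v * (x u * (x u - x v))
      = ∑ u, ∑ v, c u v * (x v * (x v - x u)) := by
    rw [Finset.sum_comm]; simp_rw [hsym]
  rw [two_mul, hform]
  nth_rw 2 [hswap]
  rw [← Finset.sum_add_distrib]
  refine Finset.sum_congr rfl fun u _ => ?_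
  rw [← Finset.sum_add_distrib]
  exact Finset.sum_congr rfl fun v _ => by ring

lemma dotProduct_laplacian_mulVec_nonneg (hsym : ∀ u v, c u v = c v u)
    (hnn : ∀ u v, 0 ≤ c u v) (x : V → ℝ) : 0 ≤ x ⬝ᵥ laplacian c *ᵥ x := by
  have h := two_mul_dotProduct_laplacian_mulVec hsym x
  have : 0 ≤ ∑ u, ∑ v, c u v * (x u - x v) ^ 2 :=
    Finset.sum_nonneg fun u _ => Finset.sum_nonneg fun v _ => mul_nonneg (hnn u v) (sq_nonneg _)
  linarith

lemma apply_eq_of_dotProduct_laplacian_mulVec_eq_zero (hsym : ∀ u v, c u v = c v u)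
    (hnn : ∀ u v, 0 ≤ c u v)
    (hconn : (SimpleGraph.fromRel fun u v : V => 0 < c u v).Connected) {x : V → ℝ}
    (hx : x ⬝ᵥ laplacian c *ᵥ x = 0) (u v : V) : x u = x v := by
  have hterms : ∑ u, ∑ v, c u v * (x u - x v) ^ 2 = 0 := by
    rw [← two_mul_dotProduct_laplacian_mulVec hsym, hx, mul_zero]
  have hadj : ∀ a b, (SimpleGraph.fromRel fun u v : V => 0 < c u v).Adj a b → x a = x b := by
    intro a b hab
    have hrow := (Finset.sum_eq_zero_iff_of_nonneg fun a _ => Finset.sum_nonneg fun b _ =>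
      mul_nonneg (hnn a b) (sq_nonneg (x a - x b))).1 hterms a (mem_univ a)
    have hterm := (Finset.sum_eq_zero_iff_of_nonneg fun b _ =>
      mul_nonneg (hnn a b) (sq_nonneg (x a - x b))).1 hrow b (mem_univ b)
    have hsq := (mul_eq_zero.1 hterm).resolve_left (pos_of_fromRel_adj hsym hab).ne'
    exact sub_eq_zero.1 (pow_eq_zero_iff two_ne_zero |>.1 hsq)
  obtain ⟨w⟩ := hconn.preconnected u v
  induction w with
  | nil => rfl
  | cons h _ ih => exact (hadj _ _ h).trans ih

lemma sum_mul_eq_two_mul_trace_mul_laplacian (hsym : ∀ u v, c u v = c v u) (B : Matrix V V ℝ) :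
    ∑ x, ∑ y, c x y * (B x x + B y y - B x y - B y x) = 2 * trace (B * laplacian c) := by
  have hdiag : ∑ x, ∑ y, c x y * B y y = ∑ x, ∑ y, c x y * B x x := by
    rw [Finset.sum_comm]; simp_rw [hsym]
  have hoff : ∑ x, ∑ y, c x y * B y x = ∑ x, ∑ y, c x y * B x y := by
    rw [Finset.sum_comm]; simp_rw [hsym]
  have htrace : trace (B * laplacian c) = ∑ x, ∑ y, c x y * B x x - ∑ x, ∑ y, c x y * B x y := by
    rw [laplacian, Matrix.mul_sub, trace_sub]
    simp only [trace, Matrix.diag, mul_diagonal]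
    simp only [Matrix.mul_apply, of_apply, nodeWeight, Finset.mul_sum]
    simp_rw [hsym, mul_comm]
  simp only [mul_add, mul_sub, Finset.sum_add_distrib, Finset.sum_sub_distrib]
  rw [hdiag, hoff, htrace]
  ring

end Laplacian

section RegularizedLaplacian

variable {c : V → V → ℝ}

variable (c) in
noncomputable def regLaplacian : Matrix V V ℝ := laplacian c + Matrix.of fun _ _ => 1

lemma regLaplacian_mulVec (x : V → ℝ) :
    regLaplacian c *ᵥ x = laplacian c *ᵥ x + fun _ => ∑ v, x v := by
  rw [regLaplacian, add_mulVec]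
  congr 1
  ext u
  simp [mulVec, dotProduct]

lemma sum_regLaplacian_mulVec (hsym : ∀ u v, c u v = c v u) (x : V → ℝ) :
    ∑ u, (regLaplacian c *ᵥ x) u = Fintype.card V * ∑ u, x u := by
  simp [regLaplacian_mulVec, Finset.sum_add_distrib, sum_laplacian_mulVec hsym]

lemma isUnit_det_regLaplacian (hsym : ∀ u v, c u v = c v u) (hnn : ∀ u v, 0 ≤ c u v)
    (hconn : (SimpleGraph.fromRel fun u v : V => 0 < c u v).Connected) :
    IsUnit (regLaplacian c).det := by
  rw [isUnit_iff_ne_zero, Ne, ← exists_mulVec_eq_zero_iff]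
  rintro ⟨x, hx0, hx⟩
  have hdot : x ⬝ᵥ regLaplacian c *ᵥ x = x ⬝ᵥ laplacian c *ᵥ x + (∑ v, x v) ^ 2 := by
    rw [regLaplacian_mulVec, dotProduct_add]
    simp [dotProduct, ← Finset.sum_mul, sq]
  rw [hx, dotProduct_zero] at hdot
  have hq := dotProduct_laplacian_mulVec_nonneg hsym hnn x
  have hL : x ⬝ᵥ laplacian c *ᵥ x = 0 := by nlinarith [sq_nonneg (∑ v, x v)]
  have hS : ∑ v, x v = 0 := by nlinarith [sq_nonneg (∑ v, x v)]
  have hconst := apply_eq_of_dotProduct_laplacian_mulVec_eq_zero hsym hnn hconn hL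
  have : Nonempty V := hconn.nonempty
  refine hx0 (funext fun u => ?_)
  simp_rw [hconst _ u, Finset.sum_const, card_univ, nsmul_eq_mul] at hS
  exact (mul_eq_zero.1 hS).resolve_left (Nat.cast_ne_zero.2 Fintype.card_ne_zero)

lemma laplacian_mulVec_inv_regLaplacian_mulVec (hsym : ∀ u v, c u v = c v u)
    (hnn : ∀ u v, 0 ≤ c u v)
    (hconn : (SimpleGraph.fromRel fun u v : V => 0 < c u v).Connected) {b : V → ℝ}
    (hb : ∑ t, b t = 0) : laplacian c *ᵥ ((regLaplacian c)⁻¹ *ᵥ b) = b := by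
  set v := (regLaplacian c)⁻¹ *ᵥ b
  have hNv : regLaplacian c *ᵥ v = b := by
    rw [mulVec_mulVec, mul_nonsing_inv _ (isUnit_det_regLaplacian hsym hnn hconn), one_mulVec]
  have hsum : ∑ t, v t = 0 := by
    have h := sum_regLaplacian_mulVec hsym v
    have : Nonempty V := hconn.nonempty
    rw [hNv, hb] at h
    exact (mul_eq_zero.1 h.symm).resolve_left (Nat.cast_ne_zero.2 Fintype.card_ne_zero)
  rwa [regLaplacian_mulVec, hsum, ← Pi.zero_def, add_zero] at hNv

lemma sum_inv_regLaplacian_apply (hsym : ∀ u v, c u v = c v u) (hnn : ∀ u v, 0 ≤ c u v)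
    (hconn : (SimpleGraph.fromRel fun u v : V => 0 < c u v).Connected) :
    ∑ u, ∑ v, (regLaplacian c)⁻¹ u v = 1 := by
  set b := (regLaplacian c)⁻¹ *ᵥ fun _ => 1
  have hb : regLaplacian c *ᵥ b = fun _ => 1 := by
    rw [mulVec_mulVec, mul_nonsing_inv _ (isUnit_det_regLaplacian hsym hnn hconn), one_mulVec]
  have hsum := sum_regLaplacian_mulVec hsym b
  have : Nonempty V := hconn.nonempty
  rw [hb] at hsum
  simp only [sum_const, card_univ, nsmul_eq_mul, mul_one] at hsum
  have : ∑ u, b u = 1 :=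
    mul_left_cancel₀ (Nat.cast_ne_zero.2 Fintype.card_ne_zero) (hsum.symm.trans (mul_one _).symm)
  simpa [b, mulVec, dotProduct] using this

lemma trace_inv_regLaplacian_mul_laplacian (hsym : ∀ u v, c u v = c v u)
    (hnn : ∀ u v, 0 ≤ c u v)
    (hconn : (SimpleGraph.fromRel fun u v : V => 0 < c u v).Connected) :
    trace ((regLaplacian c)⁻¹ * laplacian c) = Fintype.card V - 1 := by
  have hL : laplacian c = regLaplacian c - Matrix.of fun _ _ => 1 := by
    simp [regLaplacian]
  rw [hL, Matrix.mul_sub, trace_sub, nonsing_inv_mul _ (isUnit_det_regLaplacian hsym hnn hconn),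
    trace_one]
  simp [trace, Matrix.mul_apply, sum_inv_regLaplacian_apply hsym hnn hconn]

end RegularizedLaplacian

section KilledWalk

variable {c : V → V → ℝ}

lemma killed_apply_nonneg (hnn : ∀ u v, 0 ≤ c u v) (y u v : V) : 0 ≤ killed c y u v := by
  simp only [killed, transProb, of_apply]
  split_ifs
  · exact le_rfl
  · exact div_nonneg (hnn u v) (Finset.sum_nonneg fun w _ => hnn u w)

lemma sum_killed_apply_le_one (hnn : ∀ u v, 0 ≤ c u v) (y u : V) :
    ∑ v, killed c y u v ≤ 1 := by
  simp only [killed, transProb, of_apply]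
  split_ifs
  · simp
  · rw [← Finset.sum_div]
    exact div_le_one_of_le₀ le_rfl (Finset.sum_nonneg fun w _ => hnn u w)

lemma killed_apply_pos (hnn : ∀ u v, 0 ≤ c u v) {y u v : V} (hu : u ≠ y) (huv : 0 < c u v) :
    0 < killed c y u v := by
  simp only [killed, transProb, of_apply, if_neg hu]
  exact div_pos huv (huv.trans_le (Finset.single_le_sum (fun w _ => hnn u w) (mem_univ v)))

lemma exists_sum_killed_pow_apply_lt_one (hsym : ∀ u v, c u v = c v u)
    (hnn : ∀ u v, 0 ≤ c u v)
    (hconn : (SimpleGraph.fromRel fun u v : V => 0 < c u v).Connected) (y x : V) :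
    ∃ n, ∑ v, (killed c y ^ n) x v < 1 := by
  obtain ⟨w⟩ := hconn.preconnected x y
  induction w with
  | nil => exact ⟨1, by simp [killed]⟩
  | @cons a b y hab _ ih =>
    obtain ⟨n, hn⟩ := ih
    by_cases hay : a = y
    · exact ⟨1, by simp [killed, hay]⟩
    refine ⟨n + 1, ?_⟩
    rw [pow_succ', sum_mul_apply]
    calc ∑ w, killed c y a w * ∑ v, (killed c y ^ n) w v < ∑ w, killed c y a w :=
          Finset.sum_lt_sum (fun w _ => mul_le_of_le_one_right (killed_apply_nonneg hnn y a w)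
            (sum_pow_apply_le_one (killed_apply_nonneg hnn y) (sum_killed_apply_le_one hnn y) n w))
            ⟨b, mem_univ b, mul_lt_of_lt_one_right
              (killed_apply_pos hnn hay (pos_of_fromRel_adj hsym hab)) hn⟩
      _ ≤ 1 := sum_killed_apply_le_one hnn y a

lemma tendsto_killed_pow (hsym : ∀ u v, c u v = c v u) (hnn : ∀ u v, 0 ≤ c u v)
    (hconn : (SimpleGraph.fromRel fun u v : V => 0 < c u v).Connected) (y : V) :
    Tendsto (killed c y ^ ·) atTop (𝓝 0) := by
  let _ : NormedRing (Matrix V V ℝ) := Matrix.linftyOpNormedRing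
  have : Nonempty V := ⟨y⟩
  have h0 := killed_apply_nonneg hnn y
  have h1 := sum_killed_apply_le_one hnn y
  choose n hn using exists_sum_killed_pow_apply_lt_one hsym hnn hconn y
  obtain ⟨u, hu⟩ := exists_linfty_opNorm_eq_sum_apply h0
  obtain ⟨u', hu'⟩ := exists_linfty_opNorm_eq_sum_apply (pow_apply_nonneg h0 (univ.sup n))
  refine tendsto_pow_atTop_nhds_zero_of_norm_pow_lt_one (hu ▸ h1 u) (m := univ.sup n) ?_
  obtain ⟨k, hk⟩ := Nat.exists_eq_add_of_le (Finset.le_sup (f := n) (mem_univ u'))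
  rw [hu', hk]
  exact (sum_pow_add_apply_le h0 h1 _ _ u').trans_lt (hn u')

lemma visitExp_eq_of_one_sub_killed_mulVec_eq_single (hsym : ∀ u v, c u v = c v u)
    (hnn : ∀ u v, 0 ≤ c u v)
    (hconn : (SimpleGraph.fromRel fun u v : V => 0 < c u v).Connected) {y z : V} (hzy : z ≠ y)
    {w : V → ℝ} (hw : (1 - killed c y) *ᵥ w = Pi.single z 1) (x : V) :
    visitExp c x y z = w x := by
  rw [visitExp, if_neg hzy]
  exact tsum_pow_apply_eq_of_one_sub_mulVec_eq_single (killed_apply_nonneg hnn y)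
    (tendsto_killed_pow hsym hnn hconn y) hw x

lemma one_sub_killed_mulVec_apply {y z : V} (hz : z ≠ y) (hμ : nodeWeight c z ≠ 0)
    (w : V → ℝ) : ((1 - killed c y) *ᵥ w) z = (laplacian c *ᵥ w) z / nodeWeight c z := by
  rw [sub_mulVec, one_mulVec, Pi.sub_apply, laplacian_mulVec_apply]
  simp only [mulVec, dotProduct, killed, transProb, of_apply, if_neg hz]
  rw [eq_div_iff hμ, sub_mul, Finset.sum_mul]
  simp only [mul_sub, Finset.sum_sub_distrib]
  congr 1
  · rw [nodeWeight, mul_comm, Finset.sum_mul]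
  · exact Finset.sum_congr rfl fun t _ => by field_simp

lemma one_sub_killed_mulVec_apply_self (y : V) (w : V → ℝ) :
    ((1 - killed c y) *ᵥ w) y = w y := by
  rw [sub_mulVec, one_mulVec, Pi.sub_apply]
  simp [mulVec, dotProduct, killed]

lemma one_sub_killed_mulVec_eq_single (hsym : ∀ u v, c u v = c v u)
    (hnn : ∀ u v, 0 ≤ c u v)
    (hconn : (SimpleGraph.fromRel fun u v : V => 0 < c u v).Connected) {x y : V} (hxy : x ≠ y)
    {v : V → ℝ} (hv : laplacian c *ᵥ v = Pi.single x 1 - Pi.single y 1) :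
    (1 - killed c y) *ᵥ (fun t => nodeWeight c x * (v t - v y)) = Pi.single x 1 := by
  ext z
  by_cases hzy : z = y
  · subst hzy
    simp [one_sub_killed_mulVec_apply_self, Ne.symm hxy]
  rw [one_sub_killed_mulVec_apply hzy (nodeWeight_pos hsym hnn hconn hzy).ne',
    laplacian_mulVec_affine, Pi.smul_apply, hv]
  by_cases hzx : z = x
  · subst hzx
    simp [hzy, (nodeWeight_pos hsym hnn hconn hxy).ne']
  · simp [hzx, hzy]

end KilledWalk

theorem effRes_eq_inv_regLaplacian {c : V → V → ℝ} (hsym : ∀ u v, c u v = c v u)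
    (hnn : ∀ u v, 0 ≤ c u v)
    (hconn : (SimpleGraph.fromRel fun u v : V => 0 < c u v).Connected) (x y : V) :
    effRes c x y = (regLaplacian c)⁻¹ x x + (regLaplacian c)⁻¹ y y - (regLaplacian c)⁻¹ x y
      - (regLaplacian c)⁻¹ y x := by
  by_cases hxy : x = y
  · subst hxy
    simp [effRes, visitExp]
  have hLv := laplacian_mulVec_inv_regLaplacian_mulVec hsym hnn hconn
    (b := Pi.single x 1 - Pi.single y 1) (by simp [Finset.sum_sub_distrib])
  have hw := one_sub_killed_mulVec_eq_single hsym hnn hconn hxy hLv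
  rw [effRes, visitExp_eq_of_one_sub_killed_mulVec_eq_single hsym hnn hconn hxy hw, visitExp,
    if_pos rfl, add_zero, mul_div_cancel_left₀ _ (nodeWeight_pos hsym hnn hconn hxy).ne']
  simp [mulVec_sub]
  ring

lemma two_nsmul_sum_sym2_out {α M : Type*} [Fintype α] [AddCommMonoid M] (f : α → α → M)
    (hf : ∀ x y, f x y = f y x) (hdiag : ∀ x, f x x = 0) :
    2 • ∑ e : Sym2 α, f (Quot.out e).1 (Quot.out e).2 = ∑ x, ∑ y, f x y := by
  classical
  have hout : ∀ e : Sym2 α, f (Quot.out e).1 (Quot.out e).2 = Sym2.lift ⟨f, hf⟩ e := fun e => by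
    conv_rhs => rw [← Quot.out_eq e]
    rfl
  have hfiber : ∀ a b,
      ∑ p ∈ (univ : Finset (α × α)) with s(p.1, p.2) = s(a, b), f p.1 p.2 = 2 • f a b := by
    intro a b
    by_cases hab : a = b
    · subst hab
      have : (univ.filter fun p : α × α => s(p.1, p.2) = s(a, a)) = {(a, a)} := by
        ext
        simp
      rw [this, Finset.sum_singleton, hdiag, smul_zero]
    · have : (univ.filter fun p : α × α => s(p.1, p.2) = s(a, b)) = {(a, b), (b, a)} := by
        ext
        simp
      rw [this, Finset.sum_pair fun h => hab (Prod.ext_iff.1 h).1, hf b a, two_nsmul]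
  rw [← Fintype.sum_prod_type', ← Finset.sum_fiberwise univ fun p : α × α => s(p.1, p.2),
    Finset.smul_sum]
  refine Finset.sum_congr rfl fun e _ => ?_
  induction e using Sym2.ind with
  | h a b => rw [hout, Sym2.lift_mk, hfiber]

/-- **Foster-type identity for weighted graphs.** For a finite connected
weighted graph with `n` vertices, the effective resistances satisfy
`∑_{{x,y} ∈ E} R_{xy} · c_{xy} = n − 1`, the sum being over unordered edges. The sum is
taken over all unordered pairs `e : Sym2 V` (represented by `Quot.out e`); pairs that are
not edges contribute `0` since `c_{xy} = 0` there. -/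
theorem foster_identity_weighted
    (c : V → V → ℝ) (hsym : ∀ u v, c u v = c v u) (hnn : ∀ u v, 0 ≤ c u v)
    (hconn : (SimpleGraph.fromRel fun u v : V => 0 < c u v).Connected) :
    ∑ e : Sym2 V, effRes c (Quot.out e).1 (Quot.out e).2 * c (Quot.out e).1 (Quot.out e).2
      = (Fintype.card V : ℝ) - 1 := by
  set B := (regLaplacian c)⁻¹
  simp_rw [effRes_eq_inv_regLaplacian hsym hnn hconn, mul_comm _ (c _ _)]
  have hdouble := two_nsmul_sum_sym2_out (fun x y => c x y * (B x x + B y y - B x y - B y x))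
    (fun x y => by rw [hsym]; ring) (fun x => by ring)
  rw [sum_mul_eq_two_mul_trace_mul_laplacian hsym,
    trace_inv_regLaplacian_mul_laplacian hsym hnn hconn, two_nsmul] at hdouble
  linarith
end

section
/- Let G = (V,E,C) be a finite connected weighted graph with n vertices. Then the weighted sum of expected hitting times over all directed edges satisfies ∑_{(x,y) : c_{xy} > 0} E^x(τ_y) · c_{xy} / (∑_{(w,u) : c_{wu} > 0} c_{wu}) = n − 1, where both sums range over ordered pairs of adjacent vertices. -/
open Finset

variable {V : Type*} [Fintype V] [DecidableEq V]

/-!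
Fix the target `y` and let `h x = E^x(τ_y)`. The first-step equation
`h x = 1 + ∑ w, p x w * h w` for `x ≠ y` says that the graph Laplacian
`(L h) x = ∑ w, c x w * (h x - h w)` equals `μ x` off `y`. By symmetry of `c` the values of the
Laplacian of any function sum to zero, so `(L h) y = -∑_{x ≠ y} μ x`; as `h y = 0`, this reads
`∑ x, h x * c x y = ∑_{x ≠ y} μ x`. Summing over `y` gives `(n - 1) ∑ μ`, and `∑ μ` is the
total weight. The hitting times are finite because connectivity yields one `N` with
`P^x(τ_y > N) < 1` for every `x`, so the survival probabilities decay geometrically.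
-/

section Laplacian

variable {c : V → V → ℝ}

omit [DecidableEq V] in
lemma sum_sum_conductance_mul_sub_eq_zero (hsym : ∀ u v, c u v = c v u) (h : V → ℝ) :
    ∑ x, ∑ w, c x w * (h x - h w) = 0 := by
  have hswap : ∑ x, ∑ w, c x w * h w = ∑ x, ∑ w, c x w * h x := by
    rw [sum_comm]
    exact sum_congr rfl fun x _ => sum_congr rfl fun w _ => by rw [hsym]
  simp only [mul_sub, sum_sub_distrib, hswap, sub_self]

lemma sum_mul_conductance_eq_of_laplacian (hsym : ∀ u v, c u v = c v u) {h : V → ℝ} {y : V}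
    (hy : h y = 0) (hL : ∀ x ≠ y, ∑ w, c x w * (h x - h w) = nodeWeight c x) :
    ∑ x, h x * c x y = ∑ x ∈ univ.erase y, nodeWeight c x := by
  have htotal := sum_sum_conductance_mul_sub_eq_zero hsym h
  rw [← add_sum_erase _ _ (mem_univ y),
    sum_congr rfl fun x hx => hL x (ne_of_mem_erase hx), hy] at htotal
  have hty : ∑ w, c y w * (0 - h w) = -∑ x, h x * c x y := by
    simp only [zero_sub, mul_neg, sum_neg_distrib, hsym y, mul_comm]
  linarith

end Laplacian

section RandomWalk

variable {c : V → V → ℝ} {y : V}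

omit [DecidableEq V] in
lemma le_nodeWeight (hnn : ∀ u v, 0 ≤ c u v) (x w : V) : c x w ≤ nodeWeight c x :=
  single_le_sum (fun v _ => hnn x v) (mem_univ w)

omit [DecidableEq V] in
lemma nodeWeight_mul_transProb (hnn : ∀ u v, 0 ≤ c u v) (x w : V) :
    nodeWeight c x * transProb c x w = c x w := by
  by_cases hx : nodeWeight c x = 0
  · have hc : c x w = 0 := le_antisymm (hx ▸ le_nodeWeight hnn x w) (hnn x w)
    simp [transProb, hx, hc]
  · exact mul_div_cancel₀ _ hx

omit [Fintype V] [DecidableEq V] in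
lemma conductance_pos_of_adj (hsym : ∀ u v, c u v = c v u) {a b : V}
    (hab : (SimpleGraph.fromRel fun u v : V => 0 < c u v).Adj a b) : 0 < c a b := by
  obtain ⟨-, h | h⟩ := hab
  exacts [h, hsym a b ▸ h]

lemma killed_nonneg (hnn : ∀ u v, 0 ≤ c u v) (u v : V) : 0 ≤ killed c y u v := by
  simp only [killed, transProb, Matrix.of_apply]
  split_ifs
  · exact le_rfl
  · exact div_nonneg (hnn u v) (sum_nonneg fun w _ => hnn u w)

lemma killed_pow_nonneg (hnn : ∀ u v, 0 ≤ c u v) (n : ℕ) (u v : V) :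
    0 ≤ (killed c y ^ n) u v := by
  induction n generalizing v with
  | zero => rw [pow_zero, Matrix.one_apply]; split_ifs <;> norm_num
  | succ n ih =>
    rw [pow_succ, Matrix.mul_apply]
    exact sum_nonneg fun w _ => mul_nonneg (ih w) (killed_nonneg hnn w v)

lemma sum_killed_le_one (u : V) : ∑ v, killed c y u v ≤ 1 := by
  simp only [killed, transProb, Matrix.of_apply]
  split_ifs
  · simp
  · rw [← sum_div]
    exact div_self_le_one _

lemma sum_killed_eq_one {u : V} (hu : u ≠ y) (hμ : nodeWeight c u ≠ 0) :
    ∑ v, killed c y u v = 1 := by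
  simp only [killed, transProb, Matrix.of_apply, if_neg hu, ← sum_div]
  exact div_self hμ

lemma survival_add (x : V) (a b : ℕ) :
    survival c x y (a + b) = ∑ w, (killed c y ^ a) x w * survival c w y b := by
  simp only [survival, pow_add, Matrix.mul_apply, mul_sum]
  exact sum_comm

lemma survival_succ (x : V) (n : ℕ) :
    survival c x y (n + 1) = ∑ w, killed c y x w * survival c w y n := by
  rw [add_comm, survival_add, pow_one]

lemma survival_zero (x : V) : survival c x y 0 = if x = y then 0 else 1 := by
  by_cases hx : x = y <;> simp [survival, Matrix.one_apply, hx]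

lemma survival_self (n : ℕ) : survival c y y n = 0 := by
  cases n with
  | zero => simp [survival_zero]
  | succ n => simp [survival_succ, killed]

lemma survival_nonneg (hnn : ∀ u v, 0 ≤ c u v) (x : V) (n : ℕ) : 0 ≤ survival c x y n :=
  sum_nonneg fun z _ => killed_pow_nonneg hnn n x z

lemma survival_le_one (hnn : ∀ u v, 0 ≤ c u v) (x : V) (n : ℕ) : survival c x y n ≤ 1 := by
  induction n generalizing x with
  | zero => rw [survival_zero]; split_ifs <;> norm_num
  | succ n ih =>
    rw [survival_succ]
    calc ∑ w, killed c y x w * survival c w y n ≤ ∑ w, killed c y x w :=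
          sum_le_sum fun w _ => mul_le_of_le_one_right (killed_nonneg hnn x w) (ih w)
      _ ≤ 1 := sum_killed_le_one x

lemma survival_add_le (hnn : ∀ u v, 0 ≤ c u v) {b : ℕ} {B : ℝ}
    (hB : ∀ w, survival c w y b ≤ B) (x : V) (a : ℕ) :
    survival c x y (a + b) ≤ B * survival c x y a := by
  rw [survival_add, ← add_sum_erase _ _ (mem_univ y), survival_self, mul_zero, zero_add,
    survival, mul_sum]
  exact sum_le_sum fun w _ => by
    rw [mul_comm B]
    exact mul_le_mul_of_nonneg_left (hB w) (killed_pow_nonneg hnn a x w)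

lemma survival_antitone (hnn : ∀ u v, 0 ≤ c u v) (x : V) : Antitone (survival c x y) :=
  antitone_nat_of_succ_le fun n => by
    simpa using survival_add_le hnn (fun w => survival_le_one hnn w 1) x n

lemma exists_survival_lt_one_of_walk (hsym : ∀ u v, c u v = c v u) (hnn : ∀ u v, 0 ≤ c u v)
    {x z : V} (p : (SimpleGraph.fromRel fun u v : V => 0 < c u v).Walk x z) :
    ∃ N, survival c x z N < 1 := by
  induction p with
  | nil => exact ⟨0, by rw [survival_self]; norm_num⟩
  | @cons a b d hab p ih =>
    obtain ⟨N, hN⟩ := ih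
    by_cases had : a = d
    · exact ⟨0, by rw [had, survival_self]; norm_num⟩
    have hcab := conductance_pos_of_adj hsym hab
    have hμ := hcab.trans_le (le_nodeWeight hnn a b)
    have hQ : 0 < killed c d a b := by
      simpa [killed, transProb, had] using div_pos hcab hμ
    refine ⟨N + 1, ?_⟩
    rw [survival_succ, ← sum_killed_eq_one had hμ.ne']
    exact sum_lt_sum
      (fun w _ => mul_le_of_le_one_right (killed_nonneg hnn a w) (survival_le_one hnn w N))
      ⟨b, mem_univ b, mul_lt_of_lt_one_right hQ hN⟩

lemma eventually_forall_survival_lt_one (hsym : ∀ u v, c u v = c v u)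
    (hnn : ∀ u v, 0 ≤ c u v) (hconn : (SimpleGraph.fromRel fun u v : V => 0 < c u v).Connected)
    (y : V) : ∀ᶠ N in Filter.atTop, ∀ x, survival c x y N < 1 := by
  refine Filter.eventually_all.2 fun x => ?_
  obtain ⟨N, hN⟩ := exists_survival_lt_one_of_walk hsym hnn (hconn.preconnected x y).some
  exact Filter.eventually_atTop.2 ⟨N, fun n hn => (survival_antitone hnn x hn).trans_lt hN⟩

lemma summable_survival (hsym : ∀ u v, c u v = c v u) (hnn : ∀ u v, 0 ≤ c u v)
    (hconn : (SimpleGraph.fromRel fun u v : V => 0 < c u v).Connected) (x y : V) :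
    Summable (survival c x y) := by
  obtain ⟨N, hN, hN0⟩ := ((eventually_forall_survival_lt_one hsym hnn hconn y).and
    (Filter.eventually_gt_atTop 0)).exists
  have : NeZero N := ⟨hN0.ne'⟩
  set r := univ.sup' ⟨y, mem_univ y⟩ fun w => survival c w y N
  have hr1 : r < 1 := (sup'_lt_iff _).2 fun w _ => hN w
  have hle : ∀ w, survival c w y N ≤ r := fun w =>
    le_sup' (fun w => survival c w y N) (mem_univ w)
  have hr0 : 0 ≤ r := (survival_nonneg hnn y N).trans (hle y)
  have hgeom : ∀ k, survival c x y (N * k) ≤ r ^ k := by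
    intro k
    induction k with
    | zero => simpa using survival_le_one hnn x 0
    | succ k ih =>
      calc survival c x y (N * k + N)
          ≤ r * survival c x y (N * k) := survival_add_le hnn hle x _
        _ ≤ r * r ^ k := mul_le_mul_of_nonneg_left ih hr0
        _ = r ^ (k + 1) := (pow_succ' r k).symm
  -- an antitone sequence is summable as soon as its subsequence along multiples of `N` is
  rw [← summable_indicator_mod_iff (survival_antitone hnn x) ((0 : ℕ) : ZMod N),
    summable_indicator_mod_iff_summable]
  exact (summable_geometric_of_lt_one hr0 hr1).of_nonneg_of_le
    (fun k => survival_nonneg hnn x _) hgeom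

lemma hitExp_self (c : V → V → ℝ) (y : V) : hitExp c y y = 0 := by
  simp [hitExp, survival_self]

lemma hitExp_eq_one_add (hsym : ∀ u v, c u v = c v u) (hnn : ∀ u v, 0 ≤ c u v)
    (hconn : (SimpleGraph.fromRel fun u v : V => 0 < c u v).Connected) {x : V} (hxy : x ≠ y) :
    hitExp c x y = 1 + ∑ w, transProb c x w * hitExp c w y := by
  have hs := summable_survival hsym hnn hconn
  rw [hitExp, (hs x y).tsum_eq_zero_add, survival_zero, if_neg hxy]
  simp only [survival_succ]
  rw [Summable.tsum_finsetSum (f := fun w n => killed c y x w * survival c w y n)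
    fun w _ => (hs w y).mul_left _]
  simp only [tsum_mul_left, hitExp, killed, Matrix.of_apply, if_neg hxy]

lemma sum_conductance_mul_sub_hitExp (hsym : ∀ u v, c u v = c v u) (hnn : ∀ u v, 0 ≤ c u v)
    (hconn : (SimpleGraph.fromRel fun u v : V => 0 < c u v).Connected) {x : V} (hxy : x ≠ y) :
    ∑ w, c x w * (hitExp c x y - hitExp c w y) = nodeWeight c x := by
  have h := congrArg (nodeWeight c x * ·) (hitExp_eq_one_add hsym hnn hconn hxy)
  simp only [mul_add, mul_one, mul_sum, ← mul_assoc, nodeWeight_mul_transProb hnn] at h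
  simp only [mul_sub, sum_sub_distrib, ← sum_mul]
  change nodeWeight c x * hitExp c x y - _ = _
  linarith

lemma sum_hitExp_mul_conductance (hsym : ∀ u v, c u v = c v u) (hnn : ∀ u v, 0 ≤ c u v)
    (hconn : (SimpleGraph.fromRel fun u v : V => 0 < c u v).Connected) (y : V) :
    ∑ x, hitExp c x y * c x y = ∑ x ∈ univ.erase y, nodeWeight c x :=
  sum_mul_conductance_eq_of_laplacian hsym (hitExp_self c y) fun _ hxy =>
    sum_conductance_mul_sub_hitExp hsym hnn hconn hxy

lemma sum_sum_hitExp_mul_conductance (hsym : ∀ u v, c u v = c v u) (hnn : ∀ u v, 0 ≤ c u v)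
    (hconn : (SimpleGraph.fromRel fun u v : V => 0 < c u v).Connected) :
    ∑ y, ∑ x, hitExp c x y * c x y = ((Fintype.card V : ℝ) - 1) * ∑ x, nodeWeight c x := by
  simp only [sum_hitExp_mul_conductance hsym hnn hconn, sum_erase_eq_sub (mem_univ _),
    sum_sub_distrib, sum_const, card_univ, nsmul_eq_mul]
  ring

omit [DecidableEq V] in
lemma sum_nodeWeight_pos [Nontrivial V] (hsym : ∀ u v, c u v = c v u) (hnn : ∀ u v, 0 ≤ c u v)
    (hconn : (SimpleGraph.fromRel fun u v : V => 0 < c u v).Connected) :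
    0 < ∑ x, nodeWeight c x := by
  obtain ⟨u, hu⟩ := hconn.preconnected.exists_adj_of_nontrivial hconn.nonempty.some
  exact ((conductance_pos_of_adj hsym hu).trans_le (le_nodeWeight hnn _ u)).trans_le
    (single_le_sum (fun x _ => sum_nonneg fun w _ => hnn x w) (mem_univ _))

end RandomWalk

/-- For a finite connected weighted graph with `n` vertices, the weighted
sum of expected hitting times over all directed edges satisfies
`∑_{(x,y) : c_{xy} > 0} E^x(τ_y) · c_{xy} / (∑_{(w,u) : c_{wu} > 0} c_{wu}) = n − 1`,
both sums ranging over ordered pairs of adjacent vertices. -/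
theorem weighted_sum_hitting_times
    (c : V → V → ℝ) (hsym : ∀ u v, c u v = c v u) (hnn : ∀ u v, 0 ≤ c u v)
    (hconn : (SimpleGraph.fromRel fun u v : V => 0 < c u v).Connected) :
    ∑ p ∈ Finset.univ.filter (fun p : V × V => 0 < c p.1 p.2),
        hitExp c p.1 p.2 * c p.1 p.2 /
          (∑ q ∈ Finset.univ.filter (fun q : V × V => 0 < c q.1 q.2), c q.1 q.2)
      = (Fintype.card V : ℝ) - 1 := by
  have hpos : ∀ p : V × V, c p.1 p.2 ≠ 0 → 0 < c p.1 p.2 := fun _ hp => (hnn _ _).lt_of_ne' hp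
  rw [← sum_div, sum_filter_of_ne fun p _ hp => hpos p (right_ne_zero_of_mul hp),
    sum_filter_of_ne fun p _ => hpos p, Fintype.sum_prod_type, Fintype.sum_prod_type, sum_comm,
    sum_sum_hitExp_mul_conductance hsym hnn hconn]
  rcases subsingleton_or_nontrivial V with hV | hV
  · have hcard : Fintype.card V = 1 :=
      (Fintype.card_le_one_iff_subsingleton.2 hV).antisymm (Fintype.card_pos_iff.2 hconn.nonempty)
    simp [hcard]
  · exact mul_div_cancel_right₀ _ (sum_nodeWeight_pos hsym hnn hconn).ne'
end
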